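/- arXiv:1410.6549 — 3 statements merged into one kernel-verified Lean document; each statement's English description precedes it below -/
import Mathlib

section
/- There exists a semistandard Young tableau of shape ν and content μ if and only if ν dominates μ (the Gale–Ryser theorem for semistandard fillings). -/
/-!
Necessity: column strictness forces every entry in row `r` (counted from `0`) to exceed `r`, so the
`μ₀ + ⋯ + μₖ₋₁` entries `≤ k` all lie in the first `k` rows.

Sufficiency, by induction on the largest entry `n + 1`: remove from `ν` the lowest box of each of
the first `μₙ` columns (possible as `μₙ ≤ μ₀ ≤ ν₀`). The smaller shape still dominates `μ` with
its last part deleted; fill it by induction and put `n + 1` into the removed horizontal strip.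
-/

/-- `f` is a partition of `d`: nonincreasing parts, eventually zero, summing to `d`. -/
def IsPartitionOf (d : ℕ) (f : ℕ → ℕ) : Prop :=
  (∀ i j, i ≤ j → f j ≤ f i) ∧
  ∃ N, (∀ i, N ≤ i → f i = 0) ∧ ∑ i ∈ Finset.range N, f i = d

/-- `f` dominates `g`. -/
def Dominates (f g : ℕ → ℕ) : Prop :=
  ∀ k, ∑ i ∈ Finset.range k, g i ≤ ∑ i ∈ Finset.range k, f i

/-- `T` is a filling of shape `ν` with content `μ`: each box `(r,c)` (0-indexed,
`c < ν r`) gets a positive integer, and the value `i+1` is used exactly `μ i` times. -/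
def IsFilling (ν μ : ℕ → ℕ) (T : ℕ → ℕ → ℕ) : Prop :=
  (∀ r c, c < ν r → 1 ≤ T r c) ∧
  ∀ i, {p : ℕ × ℕ | p.2 < ν p.1 ∧ T p.1 p.2 = i + 1}.ncard = μ i

/-- A filling is semistandard: entries weakly increase along rows and strictly
increase down columns. -/
def IsSemistandard (ν : ℕ → ℕ) (T : ℕ → ℕ → ℕ) : Prop :=
  (∀ r c c', c ≤ c' → c' < ν r → T r c ≤ T r c') ∧
  (∀ r r' c, r < r' → c < ν r' → T r c < T r' c)

open Finset Function

def skewBoxes (κ ν : ℕ → ℕ) (L : ℕ) : Finset (ℕ × ℕ) :=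
  (range L).biUnion fun r => {r} ×ˢ Ico (κ r) (ν r)

def boxes (ν : ℕ → ℕ) (L : ℕ) : Finset (ℕ × ℕ) := skewBoxes 0 ν L

@[simp]
lemma mem_skewBoxes {κ ν : ℕ → ℕ} {L : ℕ} {p : ℕ × ℕ} :
    p ∈ skewBoxes κ ν L ↔ p.1 < L ∧ κ p.1 ≤ p.2 ∧ p.2 < ν p.1 := by
  obtain ⟨r, c⟩ := p
  simp [skewBoxes]

@[simp]
lemma mem_boxes {ν : ℕ → ℕ} {L : ℕ} {p : ℕ × ℕ} : p ∈ boxes ν L ↔ p.1 < L ∧ p.2 < ν p.1 := by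
  simp [boxes]

lemma card_skewBoxes (κ ν : ℕ → ℕ) (L : ℕ) : #(skewBoxes κ ν L) = ∑ r ∈ range L, (ν r - κ r) := by
  rw [skewBoxes, card_biUnion]
  · simp
  · intro r _ r' _ hrr'
    simp only [disjoint_left, mem_product, mem_singleton]
    exact fun p hp hp' => hrr' (hp.1.symm.trans hp'.1)

lemma card_boxes (ν : ℕ → ℕ) (L : ℕ) : #(boxes ν L) = ∑ r ∈ range L, ν r := by
  simp [boxes, card_skewBoxes]

lemma lt_of_lt_apply {ν : ℕ → ℕ} {L r c : ℕ} (hL : ∀ i, L ≤ i → ν i = 0) (hc : c < ν r) :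
    r < L := by
  by_contra! h
  simp [hL r h] at hc

lemma ncard_setOf_eq_card_filter_boxes {ν : ℕ → ℕ} {L : ℕ} (hL : ∀ i, L ≤ i → ν i = 0)
    (P : ℕ × ℕ → Prop) [DecidablePred P] :
    {p : ℕ × ℕ | p.2 < ν p.1 ∧ P p}.ncard = #{p ∈ boxes ν L | P p} := by
  rw [← Set.ncard_coe_finset]
  congr 1
  ext p
  simpa using fun _ hp => lt_of_lt_apply hL hp

lemma IsPartitionOf.antitone {d : ℕ} {f : ℕ → ℕ} (h : IsPartitionOf d f) : Antitone f :=
  fun i j hij => h.1 i j hij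

lemma IsPartitionOf.sum_range_eq {d N : ℕ} {f : ℕ → ℕ} (h : IsPartitionOf d f)
    (hN : ∀ i, N ≤ i → f i = 0) : ∑ i ∈ range N, f i = d := by
  obtain ⟨-, M, hM, rfl⟩ := h
  rw [← eventually_constant_sum hN (le_max_left N M), eventually_constant_sum hM (le_max_right N M)]

lemma IsPartitionOf.eq_zero {f : ℕ → ℕ} (h : IsPartitionOf 0 f) (i : ℕ) : f i = 0 := by
  obtain ⟨N, hN, -⟩ := h.2
  have hsum := h.sum_range_eq (N := max N (i + 1)) fun j hj => hN j (le_of_max_le_left hj)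
  exact sum_eq_zero_iff.1 hsum i (by simp)

section Filling

variable {ν μ : ℕ → ℕ} {T : ℕ → ℕ → ℕ} {L : ℕ}

lemma IsFilling.card_filter_boxes (hT : IsFilling ν μ T) (hL : ∀ i, L ≤ i → ν i = 0) (i : ℕ) :
    #{p ∈ boxes ν L | T p.1 p.2 = i + 1} = μ i := by
  rw [← hT.2 i, ncard_setOf_eq_card_filter_boxes hL]

lemma IsFilling.le_of_forall_ge_eq_zero {n : ℕ} (hT : IsFilling ν μ T) (hL : ∀ i, L ≤ i → ν i = 0)
    (hμ : ∀ i, n ≤ i → μ i = 0) {r c : ℕ} (hc : c < ν r) : T r c ≤ n := by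
  by_contra! h
  have hpos := hT.1 r c hc
  have hmem : (r, c) ∈ ({p ∈ boxes ν L | T p.1 p.2 = T r c - 1 + 1} : Finset _) := by
    simpa [lt_of_lt_apply hL hc, hc] using (Nat.sub_add_cancel hpos).symm
  have hcard := hT.card_filter_boxes hL (T r c - 1)
  rw [hμ _ (by omega), card_eq_zero] at hcard
  simp [hcard] at hmem

lemma IsSemistandard.lt_apply (hT : IsSemistandard ν T) (hν : Antitone ν)
    (hpos : ∀ r c, c < ν r → 1 ≤ T r c) (r : ℕ) {c : ℕ} (hc : c < ν r) : r < T r c := by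
  induction r with
  | zero => exact hpos 0 c hc
  | succ r ih =>
    have := hT.2 r (r + 1) c r.lt_succ_self hc
    have := ih (hc.trans_le (hν r.le_succ))
    omega

theorem IsSemistandard.dominates (hT : IsSemistandard ν T) (hfill : IsFilling ν μ T)
    (hν : Antitone ν) (hL : ∀ i, L ≤ i → ν i = 0) : Dominates ν μ := by
  intro k
  calc ∑ i ∈ range k, μ i
      = ∑ i ∈ range k, #{p ∈ boxes ν L | T p.1 p.2 = i + 1} :=
        (sum_congr rfl fun i _ => hfill.card_filter_boxes hL i).symm
    _ = #((range k).biUnion fun i => {p ∈ boxes ν L | T p.1 p.2 = i + 1}) := by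
        rw [card_biUnion]
        intro i _ j _ hij
        simpa [disjoint_filter] using fun _ _ _ h => by omega
    _ ≤ #(boxes ν k) := by
        refine card_le_card fun p hp => ?_
        simp only [mem_biUnion, mem_filter, mem_range, mem_boxes] at hp ⊢
        obtain ⟨i, hik, ⟨-, hc⟩, hTi⟩ := hp
        have hrow := hT.lt_apply hν hfill.1 p.1 hc
        exact ⟨by omega, hc⟩
    _ = ∑ i ∈ range k, ν i := card_boxes ν k

end Filling

lemma sum_update_zero_add {ι M : Type*} [DecidableEq ι] [AddCommMonoid M] {s : Finset ι} {n : ι}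
    (hn : n ∈ s) (μ : ι → M) :
    ∑ i ∈ s, update μ n 0 i + μ n = ∑ i ∈ s, μ i := by
  rw [sum_update_of_mem hn, sum_eq_add_sum_sdiff_singleton_of_mem hn, zero_add, add_comm]

lemma IsPartitionOf.update_zero {d n : ℕ} {μ : ℕ → ℕ} (h : IsPartitionOf d μ)
    (hn : ∀ i, n < i → μ i = 0) : IsPartitionOf (d - μ n) (update μ n 0) := by
  refine ⟨fun i j hij => ?_, n + 1, fun i hi => ?_, ?_⟩
  · rcases eq_or_ne j n with rfl | hj
    · simp
    rcases eq_or_ne i n with rfl | hi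
    · simp [hj, hn j (hij.lt_of_ne' hj)]
    · simpa [hi, hj] using h.1 i j hij
  · rw [update_of_ne (by omega)]
    exact hn i hi
  · have := sum_update_zero_add (self_mem_range_succ n) μ
    rw [h.sum_range_eq hn] at this
    omega

section Strip

/-- Row `i` loses the columns `c < q` with `ν (i + 1) ≤ c < ν i`: the lowest box of each of the
first `q` columns is removed. -/
def removeStrip (ν : ℕ → ℕ) (q i : ℕ) : ℕ := ν i - (min q (ν i) - min q (ν (i + 1)))

variable {ν : ℕ → ℕ} {q : ℕ}

lemma removeStrip_le (i : ℕ) : removeStrip ν q i ≤ ν i := Nat.sub_le _ _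

lemma le_removeStrip (hν : Antitone ν) (i : ℕ) : ν (i + 1) ≤ removeStrip ν q i := by
  have : ν (i + 1) ≤ ν i := hν (by omega)
  unfold removeStrip
  omega

lemma antitone_removeStrip (hν : Antitone ν) : Antitone (removeStrip ν q) :=
  antitone_nat_of_succ_le fun i => (removeStrip_le (i + 1)).trans (le_removeStrip hν i)

lemma removeStrip_eq_zero {L : ℕ} (hL : ∀ i, L ≤ i → ν i = 0) (i : ℕ) (hi : L ≤ i) :
    removeStrip ν q i = 0 :=
  Nat.eq_zero_of_le_zero (hL i hi ▸ removeStrip_le i)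

lemma sub_removeStrip (hν : Antitone ν) (i : ℕ) :
    ν i - removeStrip ν q i = min q (ν i) - min q (ν (i + 1)) := by
  have : ν (i + 1) ≤ ν i := hν (by omega)
  unfold removeStrip
  omega

lemma sum_sub_removeStrip_add_min (hν : Antitone ν) (hq : q ≤ ν 0) (K : ℕ) :
    ∑ i ∈ range K, (ν i - removeStrip ν q i) + min q (ν K) = q := by
  induction K with
  | zero => simpa using hq
  | succ K ih =>
    rw [sum_range_succ, sub_removeStrip hν]
    have : ν (K + 1) ≤ ν K := hν (by omega)
    omega

lemma sum_removeStrip_add (hν : Antitone ν) (hq : q ≤ ν 0) (K : ℕ) :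
    ∑ i ∈ range K, removeStrip ν q i + q = ∑ i ∈ range K, ν i + min q (ν K) := by
  have hsub := sum_tsub_distrib (range K) fun i _ => removeStrip_le (ν := ν) (q := q) i
  have hle := sum_le_sum fun i (_ : i ∈ range K) => removeStrip_le (ν := ν) (q := q) i
  have := sum_sub_removeStrip_add_min hν hq K
  omega

lemma IsPartitionOf.removeStrip {d : ℕ} (h : IsPartitionOf d ν) (hq : q ≤ ν 0) :
    IsPartitionOf (d - q) (removeStrip ν q) := by
  obtain ⟨N, hN, hsum⟩ := h.2
  refine ⟨fun i j hij => antitone_removeStrip h.antitone hij, N, removeStrip_eq_zero hN, ?_⟩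
  have := sum_removeStrip_add h.antitone hq N
  rw [hsum, hN N le_rfl, Nat.min_zero] at this
  omega

lemma Dominates.apply_le_apply_zero {μ : ℕ → ℕ} (h : Dominates ν μ) (hμ : Antitone μ) (n : ℕ) :
    μ n ≤ ν 0 :=
  (hμ n.zero_le).trans (by simpa using h 1)

lemma Dominates.removeStrip_update {μ : ℕ → ℕ} (h : Dominates ν μ) (hν : Antitone ν)
    (hμ : Antitone μ) (n : ℕ) : Dominates (removeStrip ν (μ n)) (update μ n 0) := by
  have hq := h.apply_le_apply_zero hμ n
  intro K
  have hs := sum_removeStrip_add hν hq K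
  have hK := h K
  rcases le_or_gt K n with hKn | hKn
  · have hμK := hμ hKn
    have hK' := h (K + 1)
    rw [sum_range_succ, sum_range_succ] at hK'
    rw [sum_update_of_notMem (by simpa using hKn)]
    omega
  · have := sum_update_zero_add (mem_range.2 hKn) μ
    omega

def addStrip (T : ℕ → ℕ → ℕ) (κ : ℕ → ℕ) (m r c : ℕ) : ℕ := if c < κ r then T r c else m

variable {κ : ℕ → ℕ} {T : ℕ → ℕ → ℕ}

lemma isSemistandard_addStrip {m : ℕ} (hT : IsSemistandard κ T) (hκ : Antitone κ)
    (hstrip : ∀ i, ν (i + 1) ≤ κ i) (hm : ∀ r c, c < κ r → T r c < m) :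
    IsSemistandard ν (addStrip T κ m) := by
  refine ⟨fun r c c' hcc' _ => ?_, fun r r' c hrr' hc => ?_⟩
  · unfold addStrip
    by_cases hc' : c' < κ r
    · rw [if_pos (hcc'.trans_lt hc'), if_pos hc']
      exact hT.1 r c c' hcc' hc'
    · rw [if_neg hc']
      split_ifs with hc
      exacts [(hm r c hc).le, le_rfl]
  · unfold addStrip
    by_cases hc' : c < κ r'
    · rw [if_pos (hc'.trans_le (hκ hrr'.le)), if_pos hc']
      exact hT.2 r r' c hrr' hc'
    · have hc : c < κ r := by
        obtain ⟨i, rfl⟩ := Nat.exists_eq_add_of_lt hrr'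
        exact hc.trans_le ((hstrip (r + i)).trans (hκ (Nat.le_add_right r i)))
      rw [if_pos hc, if_neg hc']
      exact hm r c hc

lemma isFilling_addStrip {μ : ℕ → ℕ} {n L : ℕ} (hT : IsFilling κ (update μ n 0) T)
    (hκ : ∀ i, κ i ≤ ν i) (hL : ∀ i, L ≤ i → ν i = 0) (hn : ∀ r c, c < κ r → T r c ≤ n)
    (hsum : ∑ r ∈ range L, (ν r - κ r) = μ n) : IsFilling ν μ (addStrip T κ (n + 1)) := by
  refine ⟨fun r c hc => ?_, fun i => ?_⟩
  · unfold addStrip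
    split_ifs with h
    exacts [hT.1 r c h, n.succ_pos]
  rcases eq_or_ne i n with rfl | hi
  · have hset : {p : ℕ × ℕ | p.2 < ν p.1 ∧ addStrip T κ (i + 1) p.1 p.2 = i + 1}
        = skewBoxes κ ν L := by
      ext ⟨r, c⟩
      simp only [addStrip, Set.mem_ofPred_eq, mem_coe, mem_skewBoxes]
      constructor
      · rintro ⟨hc, hTc⟩
        refine ⟨lt_of_lt_apply hL hc, not_lt.1 fun h => ?_, hc⟩
        rw [if_pos h] at hTc
        have := hn r c h
        omega
      · rintro ⟨-, hκc, hc⟩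
        exact ⟨hc, if_neg (not_lt.2 hκc)⟩
    rw [hset, Set.ncard_coe_finset, card_skewBoxes, hsum]
  · have hset : {p : ℕ × ℕ | p.2 < ν p.1 ∧ addStrip T κ (n + 1) p.1 p.2 = i + 1}
        = {p : ℕ × ℕ | p.2 < κ p.1 ∧ T p.1 p.2 = i + 1} := by
      ext ⟨r, c⟩
      simp only [addStrip, Set.mem_ofPred_eq]
      by_cases hc : c < κ r
      · simp [hc, (hc.trans_le (hκ r))]
      · simp [hc, hi.symm]
    rw [hset, hT.2 i, update_of_ne hi]

end Strip

theorem exists_semistandard_of_dominates (n : ℕ) {d : ℕ} {ν μ : ℕ → ℕ}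
    (hν : IsPartitionOf d ν) (hμ : IsPartitionOf d μ) (hn : ∀ i, n ≤ i → μ i = 0)
    (h : Dominates ν μ) : ∃ T, IsFilling ν μ T ∧ IsSemistandard ν T := by
  induction n generalizing d ν μ with
  | zero =>
    have hd : d = 0 := by simpa using (hμ.sum_range_eq (N := 0) (by simpa using hn)).symm
    subst hd
    have hν0 := hν.eq_zero
    exact ⟨fun _ _ => 0, ⟨by simp [hν0], fun i => by simp [hν0, hn i]⟩, by simp [hν0],
      by simp [hν0]⟩
  | succ n ih =>
    have hq := h.apply_le_apply_zero hμ.antitone n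
    have hn' : ∀ i, n ≤ i → update μ n 0 i = 0 := by
      intro i hi
      rcases hi.eq_or_lt with rfl | hi
      · simp
      · simp [hi.ne', hn i hi]
    obtain ⟨T, hfill, hT⟩ := ih (hν.removeStrip hq) (hμ.update_zero hn) hn'
      (h.removeStrip_update hν.antitone hμ.antitone n)
    obtain ⟨L, hL, -⟩ := hν.2
    have hTn : ∀ r c, c < removeStrip ν (μ n) r → T r c ≤ n := fun _ _ hc =>
      hfill.le_of_forall_ge_eq_zero (removeStrip_eq_zero hL) hn' hc
    refine ⟨addStrip T (removeStrip ν (μ n)) (n + 1),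
      isFilling_addStrip hfill removeStrip_le hL hTn ?_,
      isSemistandard_addStrip hT (antitone_removeStrip hν.antitone) (le_removeStrip hν.antitone)
        fun r c hc => Nat.lt_succ_of_le (hTn r c hc)⟩
    simpa [hL L le_rfl] using sum_sub_removeStrip_add_min hν.antitone hq L

/-- Gale–Ryser: there is a semistandard Young tableau of shape `ν` and content `μ`
iff `ν` dominates `μ`. -/
theorem ssyt_exists_iff_dominates (d : ℕ) (ν μ : ℕ → ℕ)
    (hν : IsPartitionOf d ν) (hμ : IsPartitionOf d μ) :
    (∃ T, IsFilling ν μ T ∧ IsSemistandard ν T) ↔ Dominates ν μ := by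
  obtain ⟨L, hL, -⟩ := hν.2
  obtain ⟨M, hM, -⟩ := hμ.2
  constructor
  · rintro ⟨T, hfill, hT⟩
    exact hT.dominates hfill hν.antitone hL
  · exact exists_semistandard_of_dominates M hν hμ hM
end

section
/- There exists a filling of shape ν with content μ such that no column contains two equal entries if and only if there exists a semistandard filling of shape ν with content μ. -/
/-- No column of the filling contains two equal entries. -/
def ColumnDistinct (ν : ℕ → ℕ) (T : ℕ → ℕ → ℕ) : Prop :=
  ∀ r r' c, r < r' → c < ν r' → T r c ≠ T r' c

open Finset

theorem Finset.sum_add_eq_sum_add_of_eqOn_sdiff_pair {ι M : Type*} [AddCommMonoid M] [DecidableEq ι]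
    {s : Finset ι} {a b : ι} {f g : ι → M} (ha : a ∈ s) (hb : b ∈ s) (hab : a ≠ b)
    (hfg : ∀ x ∈ s, x ≠ a → x ≠ b → f x = g x) :
    ∑ x ∈ s, f x + (g a + g b) = ∑ x ∈ s, g x + (f a + f b) := by
  have hb' : b ∈ s.erase a := mem_erase.2 ⟨hab.symm, hb⟩
  rw [← add_sum_erase s f ha, ← add_sum_erase _ f hb', ← add_sum_erase s g ha,
    ← add_sum_erase _ g hb', sum_congr rfl fun x hx =>
      hfg x (mem_of_mem_erase (mem_of_mem_erase hx)) (ne_of_mem_erase (mem_of_mem_erase hx))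
        (ne_of_mem_erase hx)]
  abel

theorem Finset.exists_strictMonoOn_image_range_eq (s : Finset ℕ) :
    ∃ f : ℕ → ℕ, StrictMonoOn f (Set.Iio #s) ∧ (range #s).image f = s := by
  have hf : (Set.ofPred (· ∈ s)).Finite := s.finite_toSet
  have hs : hf.toFinset = s := by ext; simp
  refine ⟨Nat.nth (· ∈ s), by simpa [hs] using Nat.nth_strictMonoOn hf, coe_injective ?_⟩
  simpa [hs] using Nat.image_nth_Iio_card hf

namespace Filling

variable (k : ℕ → ℕ) (n : ℕ)

def colSum (φ : ℕ → ℕ) (T : ℕ → ℕ → ℕ) (c : ℕ) : ℕ := ∑ r ∈ range (k c), φ (T r c)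

-- Two fillings have the same content iff their `totalSum k n φ` agree for every `φ`.
def totalSum (φ : ℕ → ℕ) (T : ℕ → ℕ → ℕ) : ℕ := ∑ c ∈ range n, colSum k φ T c

def potential (T : ℕ → ℕ → ℕ) : ℕ := ∑ c ∈ range n, c * colSum k id T c

def ColumnStrict (T : ℕ → ℕ → ℕ) : Prop := ∀ c, StrictMonoOn (T · c) (Set.Iio (k c))

def swapCols (T : ℕ → ℕ → ℕ) (c : ℕ) : ℕ → ℕ → ℕ := fun r c' =>
  if c' = c ∧ r < k (c + 1) then min (T r c) (T r (c + 1))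
  else if c' = c + 1 then max (T r c) (T r (c + 1)) else T r c'

variable {k n}

theorem colSum_swapCols_of_ne {φ : ℕ → ℕ} {T : ℕ → ℕ → ℕ} {c c' : ℕ} (h : c' ≠ c)
    (h' : c' ≠ c + 1) : colSum k φ (swapCols k T c) c' = colSum k φ T c' := by
  simp [colSum, swapCols, h, h']

theorem colSum_swapCols_add (φ : ℕ → ℕ) (T : ℕ → ℕ → ℕ) {c : ℕ} (hk : k (c + 1) ≤ k c) :
    colSum k φ (swapCols k T c) c + colSum k φ (swapCols k T c) (c + 1) =
      colSum k φ T c + colSum k φ T (c + 1) := by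
  have hminmax : ∀ a b, φ (min a b) + φ (max a b) = φ a + φ b := fun a b => by
    rcases le_total a b with h | h <;> simp [h, add_comm]
  have htail : ∀ r ∈ Ico (k (c + 1)) (k c), swapCols k T c r c = T r c := fun r hr => by
    simp [swapCols, (mem_Ico.1 hr).1]
  simp only [colSum]
  rw [← sum_range_add_sum_Ico _ hk, ← sum_range_add_sum_Ico (fun r => φ (T r c)) hk,
    sum_congr rfl fun r hr => congrArg φ (htail r hr)]
  have hhead : ∑ r ∈ range (k (c + 1)), (φ (swapCols k T c r c) + φ (swapCols k T c r (c + 1))) =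
      ∑ r ∈ range (k (c + 1)), (φ (T r c) + φ (T r (c + 1))) :=
    sum_congr rfl fun r hr => by
      simpa [swapCols, mem_range.1 hr] using hminmax (T r c) (T r (c + 1))
  rw [sum_add_distrib, sum_add_distrib] at hhead
  omega

theorem columnStrict_swapCols {T : ℕ → ℕ → ℕ} (hT : ColumnStrict k T) {c : ℕ}
    (hk : k (c + 1) ≤ k c) : ColumnStrict k (swapCols k T c) := by
  intro c' r (hr : r < k c') r' (hr' : r' < k c') hrr'
  have hA : T r c < T r' c ∨ k c ≤ r' :=
    (lt_or_ge r' (k c)).imp (fun h => hT c (hrr'.trans h) h hrr') id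
  have hB : T r (c + 1) < T r' (c + 1) ∨ k (c + 1) ≤ r' :=
    (lt_or_ge r' (k (c + 1))).imp (fun h => hT (c + 1) (hrr'.trans h) h hrr') id
  rcases eq_or_ne c' c with rfl | h₁
  · simp only [swapCols, true_and]
    split_ifs <;> omega
  rcases eq_or_ne c' (c + 1) with rfl | h₂
  · simp only [swapCols, c.succ_ne_self, false_and, if_false, if_true]
    omega
  simpa [swapCols, h₁, h₂] using hT c' hr hr' hrr'

theorem totalSum_swapCols (φ : ℕ → ℕ) (T : ℕ → ℕ → ℕ) {c : ℕ} (hk : k (c + 1) ≤ k c)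
    (hc : c + 1 < n) : totalSum k n φ (swapCols k T c) = totalSum k n φ T := by
  have := sum_add_eq_sum_add_of_eqOn_sdiff_pair (mem_range.2 (c.lt_succ_self.trans hc))
    (mem_range.2 hc) c.succ_ne_self.symm
    fun c' _ h h' => colSum_swapCols_of_ne (k := k) (φ := φ) (T := T) h h'
  rw [colSum_swapCols_add φ T hk] at this
  exact add_right_cancel this

theorem potential_le (T : ℕ → ℕ → ℕ) : potential k n T ≤ n * totalSum k n id T := by
  rw [totalSum, mul_sum]
  exact sum_le_sum fun c hc => Nat.mul_le_mul_right _ (mem_range.1 hc).le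

theorem potential_lt_potential_swapCols {T : ℕ → ℕ → ℕ} {c r : ℕ} (hk : k (c + 1) ≤ k c)
    (hc : c + 1 < n) (hr : r < k (c + 1)) (hlt : T r (c + 1) < T r c) :
    potential k n T < potential k n (swapCols k T c) := by
  have hright : colSum k id T (c + 1) < colSum k id (swapCols k T c) (c + 1) := by
    refine sum_lt_sum (fun r _ => by simp [swapCols]) ⟨r, mem_range.2 hr, ?_⟩
    simpa [swapCols] using hlt
  have hpair := colSum_swapCols_add id T hk
  have := sum_add_eq_sum_add_of_eqOn_sdiff_pair (mem_range.2 (c.lt_succ_self.trans hc))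
    (mem_range.2 hc) c.succ_ne_self.symm (f := fun c' => c' * colSum k id T c')
    (g := fun c' => c' * colSum k id (swapCols k T c) c')
    fun c' _ h h' => by rw [colSum_swapCols_of_ne h h']
  simp only [potential]
  -- the `c`-th and `(c + 1)`-st terms together grow by the growth of column `c + 1`
  nlinarith

theorem exists_columnStrict_rowWeak {T : ℕ → ℕ → ℕ} (hk : Antitone k) (hT : ColumnStrict k T) :
    ∃ T', ColumnStrict k T' ∧ (∀ φ, totalSum k n φ T' = totalSum k n φ T) ∧
      ∀ c r, c + 1 < n → r < k (c + 1) → T' r c ≤ T' r (c + 1) := by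
  set S := {T' | ColumnStrict k T' ∧ ∀ φ, totalSum k n φ T' = totalSum k n φ T}
  have hbdd : BddAbove (potential k n '' S) := by
    refine ⟨n * totalSum k n id T, ?_⟩
    rintro _ ⟨T', ⟨-, hT'⟩, rfl⟩
    exact (potential_le T').trans_eq (by rw [hT'])
  obtain ⟨T₀, hT₀, hmax⟩ :=
    Nat.sSup_mem (Set.nonempty_of_mem (Set.mem_image_of_mem _ (show T ∈ S from ⟨hT, fun _ => rfl⟩)))
      hbdd
  refine ⟨T₀, hT₀.1, hT₀.2, fun c r hc hr => not_lt.1 fun hlt => ?_⟩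
  have hswap : swapCols k T₀ c ∈ S := ⟨columnStrict_swapCols hT₀.1 (hk c.le_succ),
    fun φ => (totalSum_swapCols φ T₀ (hk c.le_succ) hc).trans (hT₀.2 φ)⟩
  have := le_csSup hbdd (Set.mem_image_of_mem _ hswap)
  rw [← hmax] at this
  exact (potential_lt_potential_swapCols (hk c.le_succ) hc hr hlt).not_ge this

theorem exists_columnStrict_of_injOn {T : ℕ → ℕ → ℕ}
    (hT : ∀ c, Set.InjOn (T · c) (Set.Iio (k c))) :
    ∃ T', ColumnStrict k T' ∧ ∀ φ c, colSum k φ T' c = colSum k φ T c := by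
  have hinj : ∀ c, Set.InjOn (T · c) (range (k c)) := fun c => by simpa using hT c
  have hcard : ∀ c, #((range (k c)).image (T · c)) = k c := fun c => by
    rw [card_image_of_injOn (hinj c), card_range]
  choose f hmono himage using fun c =>
    exists_strictMonoOn_image_range_eq ((range (k c)).image (T · c))
  simp only [hcard] at hmono himage
  refine ⟨fun r c => f c r, hmono, fun φ c => ?_⟩
  have hinjf : Set.InjOn (f c) (range (k c)) := by simpa using (hmono c).injOn
  rw [colSum, colSum, ← sum_image (f := φ) hinjf, himage, sum_image (hinj c)]

end Filling

open Filling

theorem exists_lt_iff_lt_of_antitone {ν : ℕ → ℕ} (hν : Antitone ν) {N : ℕ}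
    (hN : ∀ i, N ≤ i → ν i = 0) : ∃ k : ℕ → ℕ, ∀ r c, r < k c ↔ c < ν r := by
  classical
  refine ⟨fun c => Nat.find (⟨N, (hN N le_rfl).trans_le c.zero_le⟩ : ∃ r, ν r ≤ c),
    fun r c => ?_⟩
  rw [Nat.lt_find_iff]
  exact ⟨fun h => not_le.1 (h r le_rfl), fun h m hm => not_le.2 (h.trans_le (hν hm))⟩

section Shape

variable {ν k : ℕ → ℕ}

theorem antitone_of_lt_iff (hk : ∀ r c, r < k c ↔ c < ν r) : Antitone k := by
  intro c c' h
  by_contra! hlt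
  exact lt_irrefl _ ((hk (k c) c).2 (h.trans_lt ((hk (k c) c').1 hlt)))

theorem ColumnDistinct.injOn {T : ℕ → ℕ → ℕ} (hk : ∀ r c, r < k c ↔ c < ν r)
    (hT : ColumnDistinct ν T) (c : ℕ) : Set.InjOn (T · c) (Set.Iio (k c)) := by
  intro r (hr : r < k c) r' (hr' : r' < k c) h
  rcases lt_trichotomy r r' with hlt | heq | hgt
  · exact absurd h (hT r r' c hlt ((hk r' c).1 hr'))
  · exact heq
  · exact absurd h.symm (hT r' r c hgt ((hk r c).1 hr))

theorem ncard_boxes_eq_totalSum (hk : ∀ r c, r < k c ↔ c < ν r) (T : ℕ → ℕ → ℕ) (x : ℕ) :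
    {p : ℕ × ℕ | p.2 < ν p.1 ∧ T p.1 p.2 = x}.ncard =
      totalSum k (ν 0) (fun v => if v = x then 1 else 0) T := by
  have hset : {p : ℕ × ℕ | p.2 < ν p.1 ∧ T p.1 p.2 = x} =
      ↑((range (k 0) ×ˢ range (ν 0)).filter fun p => p.2 < ν p.1 ∧ T p.1 p.2 = x) := by
    ext ⟨r, c⟩
    simp only [Set.mem_ofPred_eq, coe_filter, mem_product, mem_range]
    refine ⟨fun h => ⟨⟨(hk r 0).2 (c.zero_le.trans_lt h.1), ?_⟩, h⟩, fun h => h.2⟩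
    exact (hk 0 c).1 (r.zero_le.trans_lt ((hk r c).2 h.1))
  rw [hset, Set.ncard_coe_finset, card_filter, sum_product_right]
  refine sum_congr rfl fun c _ => ?_
  have hsub : range (k c) ⊆ range (k 0) := range_subset_range.2 (antitone_of_lt_iff hk c.zero_le)
  rw [colSum, ← sum_subset hsub fun r _ hr => by simp [(hk r c).not.1 (by simpa using hr)]]
  exact sum_congr rfl fun r hr => by simp [(hk r c).1 (mem_range.1 hr)]

theorem isFilling_iff_totalSum {μ : ℕ → ℕ} {T : ℕ → ℕ → ℕ} (hk : ∀ r c, r < k c ↔ c < ν r) :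
    IsFilling ν μ T ↔ totalSum k (ν 0) (fun v => if v = 0 then 1 else 0) T = 0 ∧
      ∀ i, totalSum k (ν 0) (fun v => if v = i + 1 then 1 else 0) T = μ i := by
  simp only [IsFilling, ncard_boxes_eq_totalSum hk]
  refine and_congr ?_ Iff.rfl
  simp only [totalSum, colSum, sum_eq_zero_iff, mem_range, ite_eq_right_iff, one_ne_zero, imp_false]
  refine ⟨fun h c _ r hr => Nat.one_le_iff_ne_zero.1 (h r c ((hk r c).1 hr)), fun h r c hc => ?_⟩
  have hr := (hk r c).2 hc
  exact Nat.one_le_iff_ne_zero.2 (h c ((hk 0 c).1 (r.zero_le.trans_lt hr)) r hr)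

theorem isSemistandard_of_columnStrict {T : ℕ → ℕ → ℕ} (hk : ∀ r c, r < k c ↔ c < ν r)
    (hcol : ColumnStrict k T) (hrow : ∀ c r, c + 1 < ν 0 → r < k (c + 1) → T r c ≤ T r (c + 1)) :
    IsSemistandard ν T := by
  refine ⟨fun r c c' hcc' hc' => ?_, fun r r' c hrr' hc => ?_⟩
  · induction c', hcc' using Nat.le_induction with
    | base => exact le_rfl
    | succ c' hcc' ih =>
      have hr := (hk r (c' + 1)).2 hc'
      exact (ih (by omega)).trans (hrow c' r ((hk 0 _).1 (r.zero_le.trans_lt hr)) hr)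
  · have hr' := (hk r' c).2 hc
    exact hcol c (hrr'.trans hr') hr' hrr'

end Shape

theorem columnDistinct_filling_iff_ssyt_general (d : ℕ) (ν μ : ℕ → ℕ)
    (hν : IsPartitionOf d ν) :
    (∃ T, IsFilling ν μ T ∧ ColumnDistinct ν T) ↔
    (∃ T, IsFilling ν μ T ∧ IsSemistandard ν T) := by
  obtain ⟨hmono, N, hN, -⟩ := hν
  obtain ⟨k, hk⟩ := exists_lt_iff_lt_of_antitone hmono hN
  constructor
  · rintro ⟨T, hfill, hdist⟩
    obtain ⟨T₁, hstrict₁, hsum₁⟩ := exists_columnStrict_of_injOn (hdist.injOn hk)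
    obtain ⟨T₂, hstrict₂, hsum₂, hrow⟩ :=
      exists_columnStrict_rowWeak (n := ν 0) (antitone_of_lt_iff hk) hstrict₁
    have hsum : ∀ φ, totalSum k (ν 0) φ T₂ = totalSum k (ν 0) φ T := fun φ =>
      (hsum₂ φ).trans (sum_congr rfl fun c _ => hsum₁ φ c)
    refine ⟨T₂, (isFilling_iff_totalSum hk).2 ?_, isSemistandard_of_columnStrict hk hstrict₂ hrow⟩
    simpa only [hsum] using (isFilling_iff_totalSum hk).1 hfill
  · rintro ⟨T, hfill, -, hcol⟩
    exact ⟨T, hfill, fun r r' c h hc => (hcol r r' c h hc).ne⟩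

/-- There is a filling of shape `ν` with content `μ` with no repeated entry in any
column iff there is a semistandard filling of shape `ν` with content `μ`. -/
theorem columnDistinct_filling_iff_ssyt (d : ℕ) (ν μ : ℕ → ℕ)
    (hν : IsPartitionOf d ν) (hμ : IsPartitionOf d μ) :
    (∃ T, IsFilling ν μ T ∧ ColumnDistinct ν T) ↔
    (∃ T, IsFilling ν μ T ∧ IsSemistandard ν T) :=
  columnDistinct_filling_iff_ssyt_general d ν μ hν
end

section
/- Let τ : Δ_n → {1,...,n} be a map on the triangular grid such that for each i, the preimage τ⁻¹(i) has exactly n+1-i elements, and such that the restriction of τ to each row of Δ_n is a bijection onto {1,...,k} where k is the length of that row, and likewise the restriction of τ to each column of Δ_n is a bijection onto {1,...,k} where k is the length of that column. Then τ(r,c) = n+2-r-c for all (r,c) ∈ Δ_n. -/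
/-!
Induct on the anti-diagonal `r + c = s`, i.e. downwards on the value `i = n + 2 - s`, and
put `m = s - 1`. Each row `r ≤ m` contains `i` in some column `g r`. Since column `g r`
contains `i`, its length `n + 1 - g r` is at least `i`, so `g r ≤ m`; column bijectivity
makes `g` injective; and every cell strictly above the anti-diagonal carries a value `> i`
by induction, so `r + g r ≥ m + 1`. An injection of `{1, …, m}` into itself with
`r + g r ≥ m + 1` must be `r ↦ m + 1 - r`, because both sides of `∑ (r + g r) ≥ ∑ (m + 1)`
equal `m (m + 1)`.
-/

/-- The triangular grid `Δ_n = {(r,c) : 1 ≤ r, c, r+c ≤ n+1}`. -/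
def Delta (n : ℕ) : Set (ℕ × ℕ) := {p | 1 ≤ p.1 ∧ 1 ≤ p.2 ∧ p.1 + p.2 ≤ n + 1}

open Finset

theorem Finset.sum_Icc_one_id_mul_two (m : ℕ) : (∑ r ∈ Icc 1 m, r) * 2 = m * (m + 1) := by
  induction m with
  | zero => simp
  | succ k ih => rw [sum_Icc_succ_top (by omega), add_mul, ih]; ring

theorem add_eq_of_injOn_Icc_of_le_add {m : ℕ} {g : ℕ → ℕ}
    (hmaps : Set.MapsTo g (Icc 1 m) (Icc 1 m)) (hinj : Set.InjOn g (Icc 1 m))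
    (hle : ∀ r ∈ Icc 1 m, m + 1 ≤ r + g r) : ∀ r ∈ Icc 1 m, r + g r = m + 1 := by
  have hsum_g : ∑ r ∈ Icc 1 m, g r = ∑ r ∈ Icc 1 m, r :=
    sum_nbij g hmaps hinj (surjOn_of_injOn_of_card_le g hmaps hinj le_rfl) fun _ _ => rfl
  have hsum : ∑ r ∈ Icc 1 m, (r + g r) = ∑ r ∈ Icc 1 m, (m + 1) := by
    have := sum_Icc_one_id_mul_two m
    rw [sum_add_distrib, hsum_g, sum_const, Nat.card_Icc, smul_eq_mul, Nat.add_sub_cancel]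
    omega
  exact fun r hr => ((sum_eq_sum_iff_of_le hle).mp hsum.symm r hr).symm

def RowBijective (n : ℕ) (τ : ℕ × ℕ → ℕ) : Prop :=
  ∀ r, 1 ≤ r → r ≤ n →
    Set.BijOn (fun c => τ (r, c)) {c | 1 ≤ c ∧ c ≤ n + 1 - r}
      {i | 1 ≤ i ∧ i ≤ n + 1 - r}

def ColBijective (n : ℕ) (τ : ℕ × ℕ → ℕ) : Prop :=
  ∀ c, 1 ≤ c → c ≤ n →
    Set.BijOn (fun r => τ (r, c)) {r | 1 ≤ r ∧ r ≤ n + 1 - c}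
      {i | 1 ≤ i ∧ i ≤ n + 1 - c}

section

variable {n : ℕ} {τ : ℕ × ℕ → ℕ}

theorem RowBijective.exists_apply_eq (hrow : RowBijective n τ) {r i : ℕ} (hr : 1 ≤ r)
    (hi : 1 ≤ i) (hri : r + i ≤ n + 1) : ∃ c, (r, c) ∈ Delta n ∧ τ (r, c) = i := by
  obtain ⟨c, ⟨hc, hcr⟩, hτ⟩ := (hrow r hr (by omega)).surjOn
    (show i ∈ {i | 1 ≤ i ∧ i ≤ n + 1 - r} from ⟨hi, by omega⟩)
  exact ⟨c, ⟨hr, hc, by omega⟩, hτ⟩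

theorem ColBijective.apply_add_le (hcol : ColBijective n τ) {r c : ℕ} (hp : (r, c) ∈ Delta n) :
    τ (r, c) + c ≤ n + 1 := by
  obtain ⟨hr, hc, hrc⟩ := hp
  have hτ := ((hcol c hc (by omega)).mapsTo ⟨hr, by omega⟩ : τ (r, c) ∈ _).2
  omega

theorem ColBijective.fst_eq_of_apply_eq (hcol : ColBijective n τ) {r r' c : ℕ}
    (hp : (r, c) ∈ Delta n) (hp' : (r', c) ∈ Delta n) (h : τ (r, c) = τ (r', c)) :
    r = r' := by
  obtain ⟨hr, hc, hrc⟩ := hp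
  obtain ⟨hr', -, hrc'⟩ := hp'
  exact (hcol c hc (by omega)).injOn ⟨hr, by omega⟩ ⟨hr', by omega⟩ h

theorem apply_eq_of_add_eq (hrow : RowBijective n τ) (hcol : ColBijective n τ) (s : ℕ)
    (ih : ∀ p ∈ Delta n, p.1 + p.2 < s → τ p = n + 2 - p.1 - p.2) :
    ∀ p ∈ Delta n, p.1 + p.2 = s → τ p = n + 2 - p.1 - p.2 := by
  rintro ⟨r₀, c₀⟩ hp₀ rfl
  obtain ⟨hr₀, hc₀, hs⟩ := hp₀
  set m := r₀ + c₀ - 1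
  have hex : ∀ r ∈ Icc 1 m, ∃ c, (r, c) ∈ Delta n ∧ τ (r, c) = n + 1 - m := fun r hr =>
    hrow.exists_apply_eq (mem_Icc.mp hr).1 (by omega) (by simp only [mem_Icc] at hr; omega)
  choose! g hgΔ hgτ using hex
  have hmaps : Set.MapsTo g (Icc 1 m) (Icc 1 m) := fun r hr => by
    have hcol_le := hcol.apply_add_le (hgΔ r hr)
    rw [hgτ r hr] at hcol_le
    exact mem_Icc.mpr ⟨(hgΔ r hr).2.1, by omega⟩
  have hinj : Set.InjOn g (Icc 1 m) := fun r hr r' hr' h =>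
    hcol.fst_eq_of_apply_eq (hgΔ r hr) (h ▸ hgΔ r' hr') (by rw [hgτ r hr, h, hgτ r' hr'])
  have hle : ∀ r ∈ Icc 1 m, m + 1 ≤ r + g r := fun r hr => by
    by_contra! hlt
    have hval := ih _ (hgΔ r hr) (by simp only; omega)
    rw [hgτ r hr] at hval
    simp only at hval
    omega
  have hr₀m : r₀ ∈ Icc 1 m := mem_Icc.mpr ⟨hr₀, by omega⟩
  have hdiag := add_eq_of_injOn_Icc_of_le_add hmaps hinj hle r₀ hr₀m
  have hc₀ : g r₀ = c₀ := by omega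
  rw [← hc₀, hgτ r₀ hr₀m]
  omega

end

theorem tau_eq_beta_general (n : ℕ) (τ : ℕ × ℕ → ℕ)
    (hrow : ∀ r, 1 ≤ r → r ≤ n →
      Set.BijOn (fun c => τ (r, c)) {c | 1 ≤ c ∧ c ≤ n + 1 - r}
        {i | 1 ≤ i ∧ i ≤ n + 1 - r})
    (hcol : ∀ c, 1 ≤ c → c ≤ n →
      Set.BijOn (fun r => τ (r, c)) {r | 1 ≤ r ∧ r ≤ n + 1 - c}
        {i | 1 ≤ i ∧ i ≤ n + 1 - c}) :
    ∀ p ∈ Delta n, τ p = n + 2 - p.1 - p.2 := by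
  suffices ∀ s, ∀ p ∈ Delta n, p.1 + p.2 = s → τ p = n + 2 - p.1 - p.2 from
    fun p hp => this _ p hp rfl
  intro s
  induction s using Nat.strong_induction_on with
  | _ s ih => exact apply_eq_of_add_eq hrow hcol s fun p hp hlt => ih _ hlt p hp rfl

/-- If `τ : Δ_n → {1,...,n}` has fibers of sizes `n+1-i`, restricts to a bijection
of each row of `Δ_n` onto `{1,...,k}` (`k` the row length), and likewise on each
column, then `τ(r,c) = n+2-r-c`. -/
theorem tau_eq_beta (n : ℕ) (τ : ℕ × ℕ → ℕ)
    (hfib : ∀ i, 1 ≤ i → i ≤ n →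
      {p : ℕ × ℕ | p ∈ Delta n ∧ τ p = i}.ncard = n + 1 - i)
    (hrow : ∀ r, 1 ≤ r → r ≤ n →
      Set.BijOn (fun c => τ (r, c)) {c | 1 ≤ c ∧ c ≤ n + 1 - r}
        {i | 1 ≤ i ∧ i ≤ n + 1 - r})
    (hcol : ∀ c, 1 ≤ c → c ≤ n →
      Set.BijOn (fun r => τ (r, c)) {r | 1 ≤ r ∧ r ≤ n + 1 - c}
        {i | 1 ≤ i ∧ i ≤ n + 1 - c}) :
    ∀ p ∈ Delta n, τ p = n + 2 - p.1 - p.2 :=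
  tau_eq_beta_general n τ hrow hcol
end
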